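/- arXiv:2105.10017 — 2 statements merged into one kernel-verified Lean document; each statement's English description precedes it below -/
import Mathlib

section
/- Under the single 2d-change-point model, let τ_w, τ̂_h be integers with τ⁰_w ≤ τ_w ≤ T_w and τ⁰_h ≤ τ̂_h ≤ T_h, let θ̂_{(1)},…,θ̂_{(4)} ∈ ℝ^p be arbitrary vectors, and set η̂_{(1)}=θ̂_{(2)}−θ̂_{(1)} and η̂_{(3)}=θ̂_{(3)}−θ̂_{(4)}. Then the following algebraic identity holds: U_w(τ_w,τ̂_h,θ̂) = (τ_w−τ⁰_w)·[(T_h−τ⁰_h)·(‖η̂_{(1)}‖₂² + 2(θ̂_{(1)}−θ⁰_{(1)})ᵀη̂_{(1)}) + τ⁰_h·(‖η̂_{(3)}‖₂² + 2(θ̂_{(4)}−θ⁰_{(4)})ᵀη̂_{(3)})] + (τ_w−τ⁰_w)(τ̂_h−τ⁰_h)·[‖η̂_{(3)}‖₂² − ‖η̂_{(1)}‖₂² − 2(θ̂_{(1)}−θ⁰_{(1)})ᵀη̂_{(1)} + 2(θ̂_{(4)}−θ⁰_{(1)})ᵀη̂_{(3)}] − 2Σ_{w=τ⁰_w+1}^{τ_w}Σ_{h=τ⁰_h+1}^{T_h}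 ε_{(w,h)}ᵀη̂_{(1)} − 2Σ_{w=τ⁰_w+1}^{τ_w}Σ_{h=1}^{τ⁰_h} ε_{(w,h)}ᵀη̂_{(3)} + 2Σ_{w=τ⁰_w+1}^{τ_w}Σ_{h=τ⁰_h+1}^{τ̂_h} ε_{(w,h)}ᵀη̂_{(1)} − 2Σ_{w=τ⁰_w+1}^{τ_w}Σ_{h=τ⁰_h+1}^{τ̂_h} ε_{(w,h)}ᵀη̂_{(3)}. -/
open MeasureTheory ProbabilityTheory Real
open scoped RealInnerProductSpace

noncomputable section

/-- `p`-dimensional Euclidean space. -/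
abbrev Vec (p : ℕ) := EuclideanSpace ℝ (Fin p)

/-- Quadrant index of the grid point `z` relative to the split point `τ`;
`0 ↔ Q₁`, `1 ↔ Q₂`, `2 ↔ Q₃`, `3 ↔ Q₄`. -/
def quadIdx (τ z : ℕ × ℕ) : Fin 4 :=
  if τ.1 < z.1 then (if τ.2 < z.2 then 0 else 3) else (if τ.2 < z.2 then 1 else 2)

/-- The sampling grid `{1,…,T_w} × {1,…,T_h}`. -/
def sgrid (Tw Th : ℕ) : Finset (ℕ × ℕ) := Finset.Icc 1 Tw ×ˢ Finset.Icc 1 Th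

/-- The `j`-th quadrant `Q_j(τ)` of the grid. -/
def quadSet (Tw Th : ℕ) (τ : ℕ × ℕ) (j : Fin 4) : Finset (ℕ × ℕ) :=
  (sgrid Tw Th).filter fun z => quadIdx τ z = j

/-- The squared loss `L(τ_w, τ_h, θ)`. -/
def sqLoss (Tw Th : ℕ) {p : ℕ} (x : ℕ × ℕ → Vec p) (τw τh : ℕ) (θ : Fin 4 → Vec p) : ℝ :=
  ((Tw : ℝ) * Th)⁻¹ * ∑ z ∈ sgrid Tw Th, ‖x z - θ (quadIdx (τw, τh) z)‖ ^ 2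

/-- `U_w(τ_w, τ_h, θ) = T_wT_h (L(τ_w,τ_h,θ) - L(τ⁰_w,τ_h,θ))`. -/
def Uw (Tw Th : ℕ) {p : ℕ} (x : ℕ × ℕ → Vec p) (τ0w τw τh : ℕ) (θ : Fin 4 → Vec p) : ℝ :=
  (Tw : ℝ) * Th * (sqLoss Tw Th x τw τh θ - sqLoss Tw Th x τ0w τh θ)

/-- `U_h(τ_w, τ_h, θ) = T_wT_h (L(τ_w,τ_h,θ) - L(τ_w,τ⁰_h,θ))`. -/
def Uh (Tw Th : ℕ) {p : ℕ} (x : ℕ × ℕ → Vec p) (τ0h τw τh : ℕ) (θ : Fin 4 → Vec p) : ℝ :=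
  (Tw : ℝ) * Th * (sqLoss Tw Th x τw τh θ - sqLoss Tw Th x τw τ0h θ)

/-- The jump vectors `η_{(1)},…,η_{(4)}` (0-indexed). -/
def jumpVec {p : ℕ} (θ0 : Fin 4 → Vec p) : Fin 4 → Vec p :=
  ![θ0 1 - θ0 0, θ0 2 - θ0 1, θ0 2 - θ0 3, θ0 0 - θ0 3]

/-- The width-wise proportion weighted squared jump size `ξ_w²`. -/
def xiSqW {p : ℕ} (Th τ0h : ℕ) (θ0 : Fin 4 → Vec p) : ℝ :=
  ((Th : ℝ) - τ0h) / Th * ‖jumpVec θ0 0‖ ^ 2 + (1 - ((Th : ℝ) - τ0h) / Th) * ‖jumpVec θ0 2‖ ^ 2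

/-- The height-wise proportion weighted squared jump size `ξ_h²`. -/
def xiSqH {p : ℕ} (Tw τ0w : ℕ) (θ0 : Fin 4 → Vec p) : ℝ :=
  ((Tw : ℝ) - τ0w) / Tw * ‖jumpVec θ0 3‖ ^ 2 + (1 - ((Tw : ℝ) - τ0w) / Tw) * ‖jumpVec θ0 1‖ ^ 2

/-- `ξ_min = ξ_w ∧ ξ_h`. -/
def xiMin {p : ℕ} (Tw Th τ0w τ0h : ℕ) (θ0 : Fin 4 → Vec p) : ℝ :=
  min (Real.sqrt (xiSqW Th τ0h θ0)) (Real.sqrt (xiSqH Tw τ0w θ0))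

/-- `ξ̄ = max_j ξ_j`. -/
def xiBar {p : ℕ} (θ0 : Fin 4 → Vec p) : ℝ :=
  max (max ‖jumpVec θ0 0‖ ‖jumpVec θ0 1‖) (max ‖jumpVec θ0 2‖ ‖jumpVec θ0 3‖)

/-- The support `S_j` of a mean vector. -/
def suppSet {p : ℕ} (v : Vec p) : Finset (Fin p) := Finset.univ.filter fun k => v k ≠ 0

/-- The sparsity parameter `s = max_j |S_j|`. -/
def sVal {p : ℕ} (θ0 : Fin 4 → Vec p) : ℕ :=
  max (max (suppSet (θ0 0)).card (suppSet (θ0 1)).card)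
    (max (suppSet (θ0 2)).card (suppSet (θ0 3)).card)

/-- The `ℓ₁` norm on `ℝ^p`. -/
def l1 {p : ℕ} (v : Vec p) : ℝ := ∑ k, |v k|

/-- The `ℓ₁` norm of the components of `v` in the index set `S`. -/
def l1On {p : ℕ} (v : Vec p) (S : Finset (Fin p)) : ℝ := ∑ k ∈ S, |v k|

/-- The supremum norm on `ℝ^p`. -/
def linf {p : ℕ} (v : Vec p) : ℝ := ⨆ k, |v k|

/-- `ψ = max_j ‖η⁰_{(j)}‖_∞`. -/
def psiMax {p : ℕ} (θ0 : Fin 4 → Vec p) : ℝ :=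
  max (max (linf (jumpVec θ0 0)) (linf (jumpVec θ0 1)))
    (max (linf (jumpVec θ0 2)) (linf (jumpVec θ0 3)))

/-- The collection `G_w(u, v)` of width candidates. -/
def Gw (Tw τ0w : ℕ) (u v : ℝ) : Finset ℕ :=
  (Finset.Icc 1 Tw).filter fun t =>
    (Tw : ℝ) * v ≤ |(t : ℝ) - τ0w| ∧ |(t : ℝ) - τ0w| ≤ (Tw : ℝ) * u

/-- The collection `G_h(u, v)` of height candidates. -/
def Gh (Th τ0h : ℕ) (u v : ℝ) : Finset ℕ :=
  (Finset.Icc 1 Th).filter fun t =>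
    (Th : ℝ) * v ≤ |(t : ℝ) - τ0h| ∧ |(t : ℝ) - τ0h| ≤ (Th : ℝ) * u

/-- `log (p ∨ T_wT_h)`. -/
def logPT (Tw Th p : ℕ) : ℝ := Real.log (max (p : ℝ) ((Tw : ℝ) * Th))

/-- Observations from the single 2d-change-point model, for a fixed sample point `ω`. -/
def obsOf {Ω : Type*} {p : ℕ} (τ0 : ℕ × ℕ) (θ0 : Fin 4 → Vec p) (ε : ℕ × ℕ → Ω → Vec p)
    (ω : Ω) : ℕ × ℕ → Vec p :=
  fun z => θ0 (quadIdx τ0 z) + ε z ω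

/-- Quadrant-wise sample mean `x̄_{(j)}(τ)`. -/
def qmean (Tw Th : ℕ) {p : ℕ} (x : ℕ × ℕ → Vec p) (τ : ℕ × ℕ) (j : Fin 4) : Vec p :=
  (((quadSet Tw Th τ j).card : ℝ))⁻¹ • ∑ z ∈ quadSet Tw Th τ j, x z

/-- A real random variable is subexponential with variance proxy `σ²`. -/
def IsSubE {Ω : Type*} [MeasureSpace Ω] (X : Ω → ℝ) (σ : ℝ) : Prop :=
  (∫ ω, X ω) = 0 ∧
    ∀ t : ℝ, |t| ≤ 1 / σ → (∫ ω, Real.exp (t * X ω)) ≤ Real.exp (t ^ 2 * σ ^ 2 / 2)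

/-- A random vector is subexponential with variance proxy `σ²`. -/
def IsSubEVec {Ω : Type*} [MeasureSpace Ω] {p : ℕ} (X : Ω → Vec p) (σ : ℝ) : Prop :=
  ∀ v : Vec p, ‖v‖ = 1 → IsSubE (fun ω => ⟪X ω, v⟫) σ

/-- Condition A: the noise vectors are i.i.d. subexponential with variance proxy `σ²`. -/
def CondA {Ω : Type*} [MeasureSpace Ω] (Tw Th : ℕ) {p : ℕ}
    (ε : ℕ × ℕ → Ω → Vec p) (σ : ℝ) : Prop :=
  (∀ z, Measurable (ε z)) ∧
  iIndepFun
    (fun z : {z : ℕ × ℕ // z ∈ sgrid Tw Th} => ε z.1) volume ∧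
  (∀ z ∈ sgrid Tw Th, IdentDistrib (ε z) (ε (1, 1)) volume volume) ∧
  (∀ z ∈ sgrid Tw Th, IsSubEVec (ε z) σ)

/-- Condition B(i): the covariance has eigenvalues bounded in `[κ², φ²]`
(expressed through the quadratic form). -/
def CondB1 {Ω : Type*} [MeasureSpace Ω] {p : ℕ}
    (ε : ℕ × ℕ → Ω → Vec p) (κ φ : ℝ) : Prop :=
  0 < κ ∧ κ ≤ φ ∧
  ∀ v : Vec p,
    κ ^ 2 * ‖v‖ ^ 2 ≤ (∫ ω, ⟪ε (1, 1) ω, v⟫ ^ 2) ∧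
    (∫ ω, ⟪ε (1, 1) ω, v⟫ ^ 2) ≤ φ ^ 2 * ‖v‖ ^ 2

/-- Condition B(ii): each quadrant of the true change point contains at least
`T_wT_h ω̲` observations. -/
def CondB2 (Tw Th : ℕ) (τ0 : ℕ × ℕ) (ωl : ℝ) : Prop :=
  ∀ j : Fin 4, (Tw : ℝ) * Th * ωl ≤ ((quadSet Tw Th τ0 j).card : ℝ)

end

/-!
Moving the width split from `τ⁰_w` to `τ_w ≥ τ⁰_w` only reassigns the columns
`τ⁰_w < w ≤ τ_w`: there the fitted means change from those of `Q₁`/`Q₄` to those of `Q₂`/`Q₃`,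
while the true means stay those of `Q₁`/`Q₄`. Each such point contributes
`‖b - a‖² + 2⟪a - θ⁰, b - a⟫ - 2⟪ε, b - a⟫` (old fit `a`, new fit `b`), and along a column
the pair `(a, b)` and the true mean are constant on each of `[1, τ⁰_h]`, `(τ⁰_h, τ̂_h]`, `(τ̂_h, T_h]`.
-/

open Finset

section InnerProduct

variable {E : Type*} [NormedAddCommGroup E] [InnerProductSpace ℝ E]

lemma norm_add_sub_sq_sub_norm_add_sub_sq (m e a b : E) :
    ‖m + e - b‖ ^ 2 - ‖m + e - a‖ ^ 2 = ‖b - a‖ ^ 2 + 2 * ⟪a - m, b - a⟫ - 2 * ⟪e, b - a⟫ := by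
  simp only [norm_sub_sq_real, inner_sub_left, inner_sub_right, inner_add_left,
    real_inner_self_eq_norm_sq, real_inner_comm a b]
  ring

lemma sum_norm_add_sub_sq_sub_of_eqOn {ι : Type*} {I : Finset ι} {m A B : ι → E} {m₀ a b : E}
    (e : ι → E) (hm : ∀ i ∈ I, m i = m₀) (hA : ∀ i ∈ I, A i = a) (hB : ∀ i ∈ I, B i = b) :
    ∑ i ∈ I, (‖m i + e i - B i‖ ^ 2 - ‖m i + e i - A i‖ ^ 2) =
      #I * (‖b - a‖ ^ 2 + 2 * ⟪a - m₀, b - a⟫) - 2 * ∑ i ∈ I, ⟪e i, b - a⟫ := by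
  rw [sum_congr rfl fun i hi => by
    rw [hm i hi, hA i hi, hB i hi, norm_add_sub_sq_sub_norm_add_sub_sq], sum_sub_distrib,
    sum_const, nsmul_eq_mul, mul_sum]

end InnerProduct

lemma quadIdx_of_fst_le {τ : ℕ × ℕ} {w : ℕ} (h : ℕ) (hw : w ≤ τ.1) :
    quadIdx τ (w, h) = if τ.2 < h then 1 else 2 := by
  simp [quadIdx, not_lt.2 hw]

lemma quadIdx_of_fst_lt {τ : ℕ × ℕ} {w : ℕ} (h : ℕ) (hw : τ.1 < w) :
    quadIdx τ (w, h) = if τ.2 < h then 0 else 3 := by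
  simp [quadIdx, hw]

lemma sum_Icc_add_one_consecutive {M : Type*} [AddCommMonoid M] (f : ℕ → M) {a b c : ℕ}
    (hab : a ≤ b) (hbc : b ≤ c) :
    ∑ i ∈ Icc (a + 1) c, f i = ∑ i ∈ Icc (a + 1) b, f i + ∑ i ∈ Icc (b + 1) c, f i := by
  simp only [Icc_add_one_left_eq_Ioc, sum_Ioc_consecutive f hab hbc]

lemma Uw_eq_sum_sub {Tw Th p : ℕ} (x : ℕ × ℕ → Vec p) (τ0w τw τh : ℕ) (θ : Fin 4 → Vec p) :
    Uw Tw Th x τ0w τw τh θ = ∑ z ∈ sgrid Tw Th,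
      (‖x z - θ (quadIdx (τw, τh) z)‖ ^ 2 - ‖x z - θ (quadIdx (τ0w, τh) z)‖ ^ 2) := by
  rw [Uw, sqLoss, sqLoss, ← mul_sub, ← sum_sub_distrib]
  rcases eq_or_ne ((Tw : ℝ) * Th) 0 with hT | hT
  · obtain hTw | hTh := mul_eq_zero.1 hT <;> simp_all [sgrid]
  · exact mul_inv_cancel_left₀ hT _

lemma sum_sgrid_quadIdx_sub {Tw Th τ0w τw : ℕ} (τh : ℕ) (φ : ℕ × ℕ → Fin 4 → ℝ)
    (hw1 : τ0w ≤ τw) (hw2 : τw ≤ Tw) :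
    ∑ z ∈ sgrid Tw Th, (φ z (quadIdx (τw, τh) z) - φ z (quadIdx (τ0w, τh) z)) =
      ∑ w ∈ Icc (τ0w + 1) τw, ∑ h ∈ Icc 1 Th,
        (φ (w, h) (if τh < h then 1 else 2) - φ (w, h) (if τh < h then 0 else 3)) := by
  rw [sgrid, sum_product, ← sum_subset (Icc_subset_Icc (Nat.le_add_left 1 τ0w) hw2)]
  · refine sum_congr rfl fun w hw => sum_congr rfl fun h _ => ?_
    rw [mem_Icc] at hw
    rw [quadIdx_of_fst_le h hw.2, quadIdx_of_fst_lt h (show τ0w < w by omega)]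
  · intro w _ hw
    rw [mem_Icc, not_and_or, not_le, not_le] at hw
    refine sum_eq_zero fun h _ => ?_
    rcases hw with hw | hw
    · rw [quadIdx_of_fst_le h (show w ≤ τw by omega),
        quadIdx_of_fst_le h (show w ≤ τ0w by omega), sub_self]
    · rw [quadIdx_of_fst_lt h hw,
        quadIdx_of_fst_lt h (show τ0w < w by omega), sub_self]

lemma sum_Icc_norm_add_sub_sq_sub {p τ0w τ0h τhh Th w : ℕ} (θ0 θh : Fin 4 → Vec p)
    (ε : ℕ × ℕ → Vec p) (hw : τ0w < w) (hh1 : τ0h ≤ τhh) (hh2 : τhh ≤ Th) :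
    ∑ h ∈ Icc 1 Th,
        (‖θ0 (quadIdx (τ0w, τ0h) (w, h)) + ε (w, h) - θh (if τhh < h then 1 else 2)‖ ^ 2 -
          ‖θ0 (quadIdx (τ0w, τ0h) (w, h)) + ε (w, h) - θh (if τhh < h then 0 else 3)‖ ^ 2) =
      ((Th : ℝ) - τ0h) * (‖θh 1 - θh 0‖ ^ 2 + 2 * ⟪θh 0 - θ0 0, θh 1 - θh 0⟫) +
        (τ0h : ℝ) * (‖θh 2 - θh 3‖ ^ 2 + 2 * ⟪θh 3 - θ0 3, θh 2 - θh 3⟫) +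
        ((τhh : ℝ) - τ0h) *
          (‖θh 2 - θh 3‖ ^ 2 - ‖θh 1 - θh 0‖ ^ 2 -
            2 * ⟪θh 0 - θ0 0, θh 1 - θh 0⟫ + 2 * ⟪θh 3 - θ0 0, θh 2 - θh 3⟫) -
        2 * ∑ h ∈ Icc (τ0h + 1) Th, ⟪ε (w, h), θh 1 - θh 0⟫ -
        2 * ∑ h ∈ Icc 1 τ0h, ⟪ε (w, h), θh 2 - θh 3⟫ +
        2 * ∑ h ∈ Icc (τ0h + 1) τhh, ⟪ε (w, h), θh 1 - θh 0⟫ -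
        2 * ∑ h ∈ Icc (τ0h + 1) τhh, ⟪ε (w, h), θh 2 - θh 3⟫ := by
  rw [show Icc 1 Th = Icc (0 + 1) Th from rfl,
    sum_Icc_add_one_consecutive _ (Nat.zero_le τ0h) (hh1.trans hh2),
    sum_Icc_add_one_consecutive _ hh1 hh2, zero_add,
    sum_norm_add_sub_sq_sub_of_eqOn (I := Icc 1 τ0h) (m₀ := θ0 3) (a := θh 3) (b := θh 2)
      (fun h => ε (w, h)) ?_ ?_ ?_,
    sum_norm_add_sub_sq_sub_of_eqOn (I := Icc (τ0h + 1) τhh) (m₀ := θ0 0) (a := θh 3)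
      (b := θh 2) (fun h => ε (w, h)) ?_ ?_ ?_,
    sum_norm_add_sub_sq_sub_of_eqOn (I := Icc (τhh + 1) Th) (m₀ := θ0 0) (a := θh 0)
      (b := θh 1) (fun h => ε (w, h)) ?_ ?_ ?_,
    sum_Icc_add_one_consecutive _ hh1 hh2]
  · simp only [Nat.card_Icc, Nat.add_sub_cancel, Nat.add_sub_add_right, Nat.cast_sub hh1,
      Nat.cast_sub hh2]
    ring
  all_goals
    intro h hh
    rw [mem_Icc] at hh
    try rw [quadIdx_of_fst_lt h hw]
    split_ifs <;> first | rfl | omega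

theorem Uw_algebraic_decomposition_general
    (Tw Th p τ0w τ0h τw τhh : ℕ)
    (θ0 θh : Fin 4 → Vec p) (ε : ℕ × ℕ → Vec p)
    (hw1 : τ0w ≤ τw) (hw2 : τw ≤ Tw)
    (hh1 : τ0h ≤ τhh) (hh2 : τhh ≤ Th) :
    Uw Tw Th (fun z => θ0 (quadIdx (τ0w, τ0h) z) + ε z) τ0w τw τhh θh =
      ((τw : ℝ) - τ0w) *
          (((Th : ℝ) - τ0h) *
              (‖θh 1 - θh 0‖ ^ 2 + 2 * ⟪θh 0 - θ0 0, θh 1 - θh 0⟫) +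
            (τ0h : ℝ) *
              (‖θh 2 - θh 3‖ ^ 2 + 2 * ⟪θh 3 - θ0 3, θh 2 - θh 3⟫)) +
        ((τw : ℝ) - τ0w) * ((τhh : ℝ) - τ0h) *
          (‖θh 2 - θh 3‖ ^ 2 - ‖θh 1 - θh 0‖ ^ 2 -
            2 * ⟪θh 0 - θ0 0, θh 1 - θh 0⟫ + 2 * ⟪θh 3 - θ0 0, θh 2 - θh 3⟫) -
        2 * ∑ w ∈ Finset.Icc (τ0w + 1) τw, ∑ h ∈ Finset.Icc (τ0h + 1) Th,
            ⟪ε (w, h), θh 1 - θh 0⟫ -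
        2 * ∑ w ∈ Finset.Icc (τ0w + 1) τw, ∑ h ∈ Finset.Icc 1 τ0h,
            ⟪ε (w, h), θh 2 - θh 3⟫ +
        2 * ∑ w ∈ Finset.Icc (τ0w + 1) τw, ∑ h ∈ Finset.Icc (τ0h + 1) τhh,
            ⟪ε (w, h), θh 1 - θh 0⟫ -
        2 * ∑ w ∈ Finset.Icc (τ0w + 1) τw, ∑ h ∈ Finset.Icc (τ0h + 1) τhh,
            ⟪ε (w, h), θh 2 - θh 3⟫ := by
  rw [Uw_eq_sum_sub, sum_sgrid_quadIdx_sub τhh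
      (fun z i => ‖θ0 (quadIdx (τ0w, τ0h) z) + ε z - θh i‖ ^ 2) hw1 hw2,
    sum_congr rfl fun w hw =>
      sum_Icc_norm_add_sub_sq_sub θ0 θh ε (by rw [mem_Icc] at hw; omega) hh1 hh2]
  simp only [sum_add_distrib, sum_sub_distrib, sum_const, Nat.card_Icc, nsmul_eq_mul,
    ← mul_sum, Nat.add_sub_add_right, Nat.cast_sub hw1]
  ring

/-- The algebraic decomposition (Equation (2) / Remark A.2) of `U_w(τ_w, τ̂_h, θ̂)`. -/
theorem Uw_algebraic_decomposition
    (Tw Th p τ0w τ0h τw τhh : ℕ)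
    (θ0 θh : Fin 4 → Vec p) (ε : ℕ × ℕ → Vec p)
    (hTw : 0 < Tw) (hTh : 0 < Th)
    (h0w : 1 ≤ τ0w) (h0h : 1 ≤ τ0h)
    (hw1 : τ0w ≤ τw) (hw2 : τw ≤ Tw)
    (hh1 : τ0h ≤ τhh) (hh2 : τhh ≤ Th) :
    Uw Tw Th (fun z => θ0 (quadIdx (τ0w, τ0h) z) + ε z) τ0w τw τhh θh =
      ((τw : ℝ) - τ0w) *
          (((Th : ℝ) - τ0h) *
              (‖θh 1 - θh 0‖ ^ 2 + 2 * ⟪θh 0 - θ0 0, θh 1 - θh 0⟫) +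
            (τ0h : ℝ) *
              (‖θh 2 - θh 3‖ ^ 2 + 2 * ⟪θh 3 - θ0 3, θh 2 - θh 3⟫)) +
        ((τw : ℝ) - τ0w) * ((τhh : ℝ) - τ0h) *
          (‖θh 2 - θh 3‖ ^ 2 - ‖θh 1 - θh 0‖ ^ 2 -
            2 * ⟪θh 0 - θ0 0, θh 1 - θh 0⟫ + 2 * ⟪θh 3 - θ0 0, θh 2 - θh 3⟫) -
        2 * ∑ w ∈ Finset.Icc (τ0w + 1) τw, ∑ h ∈ Finset.Icc (τ0h + 1) Th,
            ⟪ε (w, h), θh 1 - θh 0⟫ -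
        2 * ∑ w ∈ Finset.Icc (τ0w + 1) τw, ∑ h ∈ Finset.Icc 1 τ0h,
            ⟪ε (w, h), θh 2 - θh 3⟫ +
        2 * ∑ w ∈ Finset.Icc (τ0w + 1) τw, ∑ h ∈ Finset.Icc (τ0h + 1) τhh,
            ⟪ε (w, h), θh 1 - θh 0⟫ -
        2 * ∑ w ∈ Finset.Icc (τ0w + 1) τw, ∑ h ∈ Finset.Icc (τ0h + 1) τhh,
            ⟪ε (w, h), θh 2 - θh 3⟫ :=
  Uw_algebraic_decomposition_general Tw Th p τ0w τ0h τw τhh θ0 θh ε hw1 hw2 hh1 hh2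
end

section
/- Under the single 2d-change-point model, for any integer τ*_w with τ⁰_w < τ*_w ≤ T_w, evaluating the loss at the true height change point and true means gives the deterministic identity T_wT_h·(L(τ⁰_w,τ⁰_h,θ⁰) − L(τ*_w,τ⁰_h,θ⁰)) = 2·Σ_{w=τ⁰_w+1}^{τ*_w} [Σ_{h=τ⁰_h+1}^{T_h} ε_{(w,h)}ᵀη⁰_{(1)} + Σ_{h=1}^{τ⁰_h} ε_{(w,h)}ᵀη⁰_{(3)}] − (τ*_w − τ⁰_w)·T_h·ξ_w². -/
open MeasureTheory ProbabilityTheory Real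
open scoped RealInnerProductSpace

/-!
Moving the width split from `τ⁰_w` to `τ*_w` only relabels the points of the strip
`τ⁰_w < w ≤ τ*_w`: they move from `Q₁` to `Q₂` above `τ⁰_h` and from `Q₄` to `Q₃` below it.
At the true means the residual of such a point changes from `ε` to `ε - η`, with `η = η⁰_{(1)}`
or `η⁰_{(3)}`, and `‖ε‖² - ‖ε - η‖² = 2 εᵀη - ‖η‖²`. Summing over the strip row by row gives
the identity, the constant terms adding up to `(τ*_w - τ⁰_w) T_h ξ_w²`.
-/

theorem sq_norm_sub_sq_norm_sub_eq {E : Type*} [NormedAddCommGroup E] [InnerProductSpace ℝ E]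
    (e η : E) : ‖e‖ ^ 2 - ‖e - η‖ ^ 2 = 2 * ⟪e, η⟫ - ‖η‖ ^ 2 := by
  rw [norm_sub_sq_real]
  ring

theorem Finset.sum_Icc_ite_lt {M : Type*} [AddCommMonoid M] {τ T : ℕ} (hτ : τ ≤ T)
    (f g : ℕ → M) :
    ∑ h ∈ Finset.Icc 1 T, (if τ < h then f h else g h) =
      ∑ h ∈ Finset.Icc (τ + 1) T, f h + ∑ h ∈ Finset.Icc 1 τ, g h := by
  rw [Finset.sum_ite]
  congr 2 <;> ext h <;> simp only [Finset.mem_filter, Finset.mem_Icc] <;> omega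

theorem natCast_mul_natCast_mul_sqLoss_sub {p : ℕ} (Tw Th : ℕ) (x : ℕ × ℕ → Vec p)
    (τw τh τw' τh' : ℕ) (θ θ' : Fin 4 → Vec p) :
    (Tw : ℝ) * Th * (sqLoss Tw Th x τw τh θ - sqLoss Tw Th x τw' τh' θ') =
      ∑ z ∈ sgrid Tw Th,
        (‖x z - θ (quadIdx (τw, τh) z)‖ ^ 2 - ‖x z - θ' (quadIdx (τw', τh') z)‖ ^ 2) := by
  by_cases hT : (Tw : ℝ) * Th = 0
  · have hgrid : sgrid Tw Th = ∅ := by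
      rcases mul_eq_zero.1 hT with h | h <;> simp [sgrid, Nat.cast_eq_zero.1 h]
    simp [hT, hgrid]
  · rw [sqLoss, sqLoss, ← mul_sub, mul_inv_cancel_left₀ hT, Finset.sum_sub_distrib]

theorem quadIdx_eq_of_not_mem_Icc {a b t w h : ℕ} (hab : a ≤ b)
    (hw : w ∉ Finset.Icc (a + 1) b) : quadIdx (a, t) (w, h) = quadIdx (b, t) (w, h) := by
  rw [Finset.mem_Icc] at hw
  by_cases haw : a < w
  · simp only [quadIdx, haw, show b < w by omega, if_true]
  · simp only [quadIdx, haw, show ¬b < w by omega, if_false]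

theorem sq_norm_residual_sub_of_mem_Icc {p : ℕ} (θ : Fin 4 → Vec p) (e : Vec p)
    {a b t w h : ℕ} (hw : w ∈ Finset.Icc (a + 1) b) :
    ‖θ (quadIdx (a, t) (w, h)) + e - θ (quadIdx (a, t) (w, h))‖ ^ 2 -
        ‖θ (quadIdx (a, t) (w, h)) + e - θ (quadIdx (b, t) (w, h))‖ ^ 2 =
      if t < h then 2 * ⟪e, jumpVec θ 0⟫ - ‖jumpVec θ 0‖ ^ 2
      else 2 * ⟪e, jumpVec θ 2⟫ - ‖jumpVec θ 2‖ ^ 2 := by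
  rw [Finset.mem_Icc] at hw
  simp only [quadIdx, show a < w by omega, show ¬b < w by omega, if_true, if_false]
  split_ifs
  · rw [← sq_norm_sub_sq_norm_sub_eq, show jumpVec θ 0 = θ 1 - θ 0 from rfl]
    congr 3 <;> abel
  · rw [← sq_norm_sub_sq_norm_sub_eq, show jumpVec θ 2 = θ 2 - θ 3 from rfl]
    congr 3 <;> abel

theorem natCast_mul_xiSqW {p : ℕ} {Th τ0h : ℕ} (hτ : τ0h ≤ Th) (θ : Fin 4 → Vec p) :
    (Th : ℝ) * xiSqW Th τ0h θ =
      ((Th : ℝ) - τ0h) * ‖jumpVec θ 0‖ ^ 2 + τ0h * ‖jumpVec θ 2‖ ^ 2 := by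
  rcases Nat.eq_zero_or_pos Th with rfl | hTh
  · obtain rfl : τ0h = 0 := by omega
    simp
  · have : (Th : ℝ) ≠ 0 := by positivity
    rw [xiSqW]
    field_simp
    ring

theorem Cw_decomposition_at_true_parameters_general
    (Tw Th p τ0w τ0h τstar : ℕ)
    (θ0 : Fin 4 → Vec p) (ε : ℕ × ℕ → Vec p)
    (h0hT : τ0h ≤ Th)
    (hs1 : τ0w < τstar) (hs2 : τstar ≤ Tw) :
    (Tw : ℝ) * Th *
        (sqLoss Tw Th (fun z => θ0 (quadIdx (τ0w, τ0h) z) + ε z) τ0w τ0h θ0 -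
          sqLoss Tw Th (fun z => θ0 (quadIdx (τ0w, τ0h) z) + ε z) τstar τ0h θ0) =
      2 * ∑ w ∈ Finset.Icc (τ0w + 1) τstar,
          ((∑ h ∈ Finset.Icc (τ0h + 1) Th, ⟪ε (w, h), jumpVec θ0 0⟫) +
            ∑ h ∈ Finset.Icc 1 τ0h, ⟪ε (w, h), jumpVec θ0 2⟫) -
        ((τstar : ℝ) - τ0w) * Th * xiSqW Th τ0h θ0 := by
  set strip := Finset.Icc (τ0w + 1) τstar
  have hstrip : strip ×ˢ Finset.Icc 1 Th ⊆ sgrid Tw Th := by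
    intro z hz
    simp only [strip, sgrid, Finset.mem_product, Finset.mem_Icc] at hz ⊢
    omega
  have hcard (a b : ℕ) (hab : a ≤ b) : ((Finset.Icc (a + 1) b).card : ℝ) = (b : ℝ) - a := by
    rw [Nat.card_Icc, Nat.add_sub_add_right, Nat.cast_sub hab]
  rw [natCast_mul_natCast_mul_sqLoss_sub, ← Finset.sum_subset hstrip, Finset.sum_product]
  · rw [Finset.sum_congr rfl fun w hw => Finset.sum_congr rfl fun h _ =>
        sq_norm_residual_sub_of_mem_Icc θ0 (ε (w, h)) hw (t := τ0h)]
    simp only [Finset.sum_Icc_ite_lt h0hT, Finset.sum_sub_distrib, Finset.sum_add_distrib,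
      Finset.sum_const, nsmul_eq_mul, ← Finset.mul_sum]
    rw [hcard _ _ hs1.le, hcard _ _ h0hT, Nat.card_Icc, Nat.add_sub_cancel,
      mul_assoc _ (Th : ℝ), natCast_mul_xiSqW h0hT]
    ring
  · rintro ⟨w, h⟩ hz hz'
    have hw : w ∉ strip := fun hw => hz' (Finset.mem_product.2 ⟨hw, (Finset.mem_product.1 hz).2⟩)
    rw [quadIdx_eq_of_not_mem_Icc hs1.le hw, sub_self]

/-- The decomposition (Equation (39)) of the criterion at the true height change point
and true means. -/
theorem Cw_decomposition_at_true_parameters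
    (Tw Th p τ0w τ0h τstar : ℕ)
    (θ0 : Fin 4 → Vec p) (ε : ℕ × ℕ → Vec p)
    (hTw : 0 < Tw) (hTh : 0 < Th)
    (h0w : 1 ≤ τ0w) (h0h : 1 ≤ τ0h) (h0hT : τ0h ≤ Th)
    (hs1 : τ0w < τstar) (hs2 : τstar ≤ Tw) :
    (Tw : ℝ) * Th *
        (sqLoss Tw Th (fun z => θ0 (quadIdx (τ0w, τ0h) z) + ε z) τ0w τ0h θ0 -
          sqLoss Tw Th (fun z => θ0 (quadIdx (τ0w, τ0h) z) + ε z) τstar τ0h θ0) =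
      2 * ∑ w ∈ Finset.Icc (τ0w + 1) τstar,
          ((∑ h ∈ Finset.Icc (τ0h + 1) Th, ⟪ε (w, h), jumpVec θ0 0⟫) +
            ∑ h ∈ Finset.Icc 1 τ0h, ⟪ε (w, h), jumpVec θ0 2⟫) -
        ((τstar : ℝ) - τ0w) * Th * xiSqW Th τ0h θ0 :=
  Cw_decomposition_at_true_parameters_general Tw Th p τ0w τ0h τstar θ0 ε h0hT hs1 hs2
end
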